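/- arXiv:2509.12695 — 2 statements merged into one kernel-verified Lean document; each statement's English description precedes it below -/
import Mathlib

section
/- Let P be a symmetric positive definite real n×n matrix, α > 0, and let M₁, …, M_N be real n×n matrices such that Mᵢᵀ P Mᵢ − P ≼ −α I for every i. Then for any nonnegative weights μ₁, …, μ_N summing to 1, the matrix M := Σᵢ μᵢ Mᵢ satisfies Mᵀ P M − P ≼ −α I. -/
/-! For `P ≽ 0` the map `A ↦ Aᵀ P A` is convex in the Loewner order: with weights summing to one
and `M̄ = ∑ μᵢ Mᵢ`, the matrix variance identity
`∑ μᵢ Mᵢᵀ P Mᵢ - M̄ᵀ P M̄ = ∑ μᵢ (Mᵢ - M̄)ᵀ P (Mᵢ - M̄)` exhibits the left side as positive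
semidefinite. Averaging the vertex inequalities `Mᵢᵀ P Mᵢ ≼ P - α I` thus gives
`M̄ᵀ P M̄ ≼ P - α I`. -/

open Matrix

namespace Matrix

variable {ι m n R : Type*} [Fintype m]

theorem sum_smul_transpose_mul_mul_sub_eq [CommRing R] (s : Finset ι) (μ : ι → R)
    (hμ : ∑ i ∈ s, μ i = 1) (P : Matrix m m R) (M : ι → Matrix m n R) (A : Matrix m n R)
    (hA : ∑ i ∈ s, μ i • M i = A) :
    ∑ i ∈ s, μ i • ((M i - A)ᵀ * P * (M i - A)) =
      ∑ i ∈ s, μ i • ((M i)ᵀ * P * M i) - Aᵀ * P * A := by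
  have hleft : ∑ i ∈ s, μ i • ((M i)ᵀ * P * A) = Aᵀ * P * A := by
    simp only [← hA, transpose_sum, transpose_smul, Matrix.sum_mul, Matrix.smul_mul]
  have hright : ∑ i ∈ s, μ i • (Aᵀ * P * M i) = Aᵀ * P * A := by
    simp only [← hA, Matrix.mul_sum, Matrix.mul_smul]
  have hconst : ∑ i ∈ s, μ i • (Aᵀ * P * A) = Aᵀ * P * A := by
    rw [← Finset.sum_smul, hμ, one_smul]
  simp only [transpose_sub, Matrix.sub_mul, Matrix.mul_sub, smul_sub, Finset.sum_sub_distrib,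
    hleft, hright, hconst]
  abel

variable [CommRing R] [PartialOrder R] [IsOrderedRing R] [StarRing R] [TrivialStar R]
  [StarOrderedRing R] [Fintype n]

theorem PosSemidef.sum_smul_transpose_mul_mul_sub {P : Matrix m m R} (hP : P.PosSemidef)
    (s : Finset ι) {μ : ι → R} (hμ₀ : ∀ i ∈ s, 0 ≤ μ i) (hμ : ∑ i ∈ s, μ i = 1)
    (M : ι → Matrix m n R) :
    (∑ i ∈ s, μ i • ((M i)ᵀ * P * M i) -
      (∑ i ∈ s, μ i • M i)ᵀ * P * ∑ i ∈ s, μ i • M i).PosSemidef := by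
  rw [← sum_smul_transpose_mul_mul_sub_eq s μ hμ P M _ rfl]
  refine posSemidef_sum s fun i hi => PosSemidef.smul ?_ (hμ₀ i hi)
  simpa only [conjTranspose_eq_transpose_of_trivial] using hP.conjTranspose_mul_mul_same _

theorem PosSemidef.sub_transpose_mul_mul_sum_smul {P : Matrix m m R} {C : Matrix n n R}
    (hP : P.PosSemidef) (s : Finset ι) {μ : ι → R} (hμ₀ : ∀ i ∈ s, 0 ≤ μ i)
    (hμ : ∑ i ∈ s, μ i = 1) {M : ι → Matrix m n R}
    (hM : ∀ i ∈ s, (C - (M i)ᵀ * P * M i).PosSemidef) :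
    (C - (∑ i ∈ s, μ i • M i)ᵀ * P * ∑ i ∈ s, μ i • M i).PosSemidef := by
  have hmix : (∑ i ∈ s, μ i • (C - (M i)ᵀ * P * M i)).PosSemidef :=
    posSemidef_sum s fun i hi => (hM i hi).smul (hμ₀ i hi)
  convert hmix.add (hP.sum_smul_transpose_mul_mul_sub s hμ₀ hμ M) using 1
  simp only [smul_sub, Finset.sum_sub_distrib, ← Finset.sum_smul, hμ, one_smul]
  abel

end Matrix

theorem convex_combination_uniform_decay_general
    {n N : ℕ} (P : Matrix (Fin n) (Fin n) ℝ) (hP : P.PosDef)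
    (α : ℝ)
    (M : Fin N → Matrix (Fin n) (Fin n) ℝ)
    (hvert : ∀ i,
      Matrix.PosSemidef ((-α • (1 : Matrix (Fin n) (Fin n) ℝ)) -
        ((M i)ᵀ * P * M i - P)))
    (μ : Fin N → ℝ) (hμ : ∀ i, 0 ≤ μ i) (hsum : ∑ i, μ i = 1) :
    Matrix.PosSemidef ((-α • (1 : Matrix (Fin n) (Fin n) ℝ)) -
      ((∑ i, μ i • M i)ᵀ * P * (∑ i, μ i • M i) - P)) := by
  simp only [sub_sub_eq_add_sub] at hvert ⊢
  exact hP.posSemidef.sub_transpose_mul_mul_sum_smul _ (fun i _ => hμ i) hsum fun i _ => hvert i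

/-- Uniform-decay version of Lemma 1: if `Mᵢᵀ P Mᵢ - P ≼ -α I` for every vertex
matrix `Mᵢ` (with `P` symmetric positive definite and `α > 0`), then the same
inequality holds for every convex combination `M = Σᵢ μᵢ Mᵢ`. -/
theorem convex_combination_uniform_decay
    {n N : ℕ} (P : Matrix (Fin n) (Fin n) ℝ) (hP : P.PosDef)
    (α : ℝ) (hα : 0 < α)
    (M : Fin N → Matrix (Fin n) (Fin n) ℝ)
    (hvert : ∀ i,
      Matrix.PosSemidef ((-α • (1 : Matrix (Fin n) (Fin n) ℝ)) -
        ((M i)ᵀ * P * M i - P)))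
    (μ : Fin N → ℝ) (hμ : ∀ i, 0 ≤ μ i) (hsum : ∑ i, μ i = 1) :
    Matrix.PosSemidef ((-α • (1 : Matrix (Fin n) (Fin n) ℝ)) -
      ((∑ i, μ i • M i)ᵀ * P * (∑ i, μ i • M i) - P)) :=
  convex_combination_uniform_decay_general P hP α M hvert μ hμ hsum
end

section
/- Let P be a symmetric positive definite real n×n matrix, α > 0, and let Φ_cl : ℝ^p → (real n×n matrices) be Lipschitz continuous with constant L > 0 with respect to the operator norm. Suppose (ρ_k) and (ρ̂_k) are sequences in ℝ^p such that Φ_cl(ρ_k)ᵀ P Φ_cl(ρ_k) − P ≼ −α I for every k. Then there exist constants ε* > 0, C > 0 and λ ∈ (0, 1), depending only on P, α and L, such that whenever ‖ρ̂_k − ρ_k‖ < ε* for all k, every trajectory of x_{k+1} = Φ_cl(ρ̂_k) x_k satisfies ‖x_k‖ ≤ C λᵏ ‖x₀‖ for all k; i.e., the origin is exponentially stable despite the scheduling mismatch. -/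
open Matrix
open scoped Matrix.Norms.L2Operator RealInnerProductSpace MatrixOrder

/-!
The Lyapunov function `xᵀ P x` is the square of the norm `x ↦ ‖B x‖`, where `P = Bᵀ B` with `B`
invertible. In this norm the Lyapunov inequality makes every true closed-loop matrix a
contraction with a uniform rate `μ < 1`, and adding a perturbation `Δ` raises the rate by at most
`‖B‖ ‖B⁻¹‖ ‖Δ‖`. By the Lipschitz bound, a small enough estimation error keeps the perturbed rate
below `(1 + μ) / 2`, and comparing the two norms turns the geometric decay of `‖B xₖ‖` into
`‖xₖ‖ ≤ C λᵏ ‖x₀‖`.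
-/

section LyapunovNorm

variable {E F : Type*} [NormedAddCommGroup E] [NormedSpace ℝ E]
  [NormedAddCommGroup F] [NormedSpace ℝ F]

lemma norm_apply_le_of_lyapunov_decrease (S : E →L[ℝ] F) {A : E → E} {α : ℝ} (hα : 0 < α)
    (h : ∀ x, ‖S (A x)‖ ^ 2 + α * ‖x‖ ^ 2 ≤ ‖S x‖ ^ 2) (x : E) :
    ‖S (A x)‖ ≤ √(‖S‖ ^ 2 / (α + ‖S‖ ^ 2)) * ‖S x‖ := by
  have hSx : ‖S x‖ ^ 2 ≤ ‖S‖ ^ 2 * ‖x‖ ^ 2 := by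
    rw [← mul_pow]; gcongr; exact S.le_opNorm x
  have hx := h x
  have key : (α + ‖S‖ ^ 2) * ‖S (A x)‖ ^ 2 ≤ ‖S‖ ^ 2 * ‖S x‖ ^ 2 := by
    nlinarith [mul_le_mul_of_nonneg_left hx (sq_nonneg ‖S‖),
      mul_le_mul_of_nonneg_left hx hα.le, mul_le_mul_of_nonneg_left hSx hα.le,
      mul_nonneg (sq_nonneg α) (sq_nonneg ‖x‖)]
  rw [← Real.sqrt_sq (norm_nonneg (S x)), ← Real.sqrt_mul' _ (sq_nonneg _)]
  refine Real.le_sqrt_of_sq_le ?_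
  rw [div_mul_eq_mul_div, le_div_iff₀ (by positivity)]
  linarith

lemma norm_add_apply_le_of_norm_apply_le (S : E →L[ℝ] F) {c μ : ℝ}
    (hS : ∀ x, ‖x‖ ≤ c * ‖S x‖) {A : E →L[ℝ] E} (hA : ∀ x, ‖S (A x)‖ ≤ μ * ‖S x‖)
    (Δ : E →L[ℝ] E) (x : E) :
    ‖S ((A + Δ) x)‖ ≤ (μ + c * ‖S‖ * ‖Δ‖) * ‖S x‖ :=
  calc ‖S ((A + Δ) x)‖ ≤ ‖S (A x)‖ + ‖S (Δ x)‖ := by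
        rw [_root_.add_apply, map_add]; exact norm_add_le _ _
    _ ≤ μ * ‖S x‖ + ‖S‖ * (‖Δ‖ * (c * ‖S x‖)) := by
        gcongr
        · exact hA x
        · exact S.le_opNorm_of_le (Δ.le_opNorm_of_le (hS x))
    _ = (μ + c * ‖S‖ * ‖Δ‖) * ‖S x‖ := by ring

lemma norm_le_mul_pow_of_norm_apply_succ_le (S : E →L[ℝ] F) {c r : ℝ} (hc : 0 ≤ c)
    (hS : ∀ x, ‖x‖ ≤ c * ‖S x‖) (hr : 0 ≤ r) {x : ℕ → E}
    (hx : ∀ k, ‖S (x (k + 1))‖ ≤ r * ‖S (x k)‖) (k : ℕ) :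
    ‖x k‖ ≤ c * ‖S‖ * r ^ k * ‖x 0‖ :=
  calc ‖x k‖ ≤ c * ‖S (x k)‖ := hS (x k)
    _ ≤ c * (r ^ k * ‖S (x 0)‖) := by
        gcongr; exact le_geom (u := fun k ↦ ‖S (x k)‖) hr k fun k _ ↦ hx k
    _ ≤ c * (r ^ k * (‖S‖ * ‖x 0‖)) := by gcongr; exact S.le_opNorm _
    _ = c * ‖S‖ * r ^ k * ‖x 0‖ := by ring

theorem exists_robust_exponential_decay (S : E →L[ℝ] F) {c α : ℝ} (hc : 0 ≤ c)
    (hS : ∀ x, ‖x‖ ≤ c * ‖S x‖) (hα : 0 < α) :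
    ∃ δ C r : ℝ, 0 < δ ∧ 0 < C ∧ 0 < r ∧ r < 1 ∧
      ∀ A A' : ℕ → E →L[ℝ] E, (∀ k x, ‖S (A k x)‖ ^ 2 + α * ‖x‖ ^ 2 ≤ ‖S x‖ ^ 2) →
        (∀ k, ‖A' k - A k‖ < δ) → ∀ x : ℕ → E, (∀ k, x (k + 1) = A' k (x k)) →
          ∀ k, ‖x k‖ ≤ C * r ^ k * ‖x 0‖ := by
  set μ := √(‖S‖ ^ 2 / (α + ‖S‖ ^ 2))
  set κ := c * ‖S‖
  have hμ : μ < 1 := (Real.sqrt_lt' one_pos).mpr <| by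
    rw [one_pow, div_lt_one (by positivity)]; linarith
  have hκ : 0 ≤ κ := by positivity
  refine ⟨(1 - μ) / (2 * (κ + 1)), κ + 1, (1 + μ) / 2, div_pos (by linarith) (by positivity),
    by positivity, by positivity, by linarith, ?_⟩
  intro A A' hA hclose x hx
  have hstep (k : ℕ) : ‖S (x (k + 1))‖ ≤ (1 + μ) / 2 * ‖S (x k)‖ := by
    have hgap : κ * ‖A' k - A k‖ ≤ (1 - μ) / 2 :=
      calc κ * ‖A' k - A k‖ ≤ (κ + 1) * ((1 - μ) / (2 * (κ + 1))) := by
            gcongr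
            · linarith
            · exact (hclose k).le
        _ = (1 - μ) / 2 := by field_simp
    calc ‖S (x (k + 1))‖ = ‖S ((A k + (A' k - A k)) (x k))‖ := by rw [hx k, add_sub_cancel]
      _ ≤ (μ + κ * ‖A' k - A k‖) * ‖S (x k)‖ := norm_add_apply_le_of_norm_apply_le S hS
          (norm_apply_le_of_lyapunov_decrease S hα (hA k)) _ _
      _ ≤ (1 + μ) / 2 * ‖S (x k)‖ := by gcongr; linarith
  intro k
  calc ‖x k‖ ≤ κ * ((1 + μ) / 2) ^ k * ‖x 0‖ :=
        norm_le_mul_pow_of_norm_apply_succ_le S hc hS (by positivity) hstep k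
    _ ≤ (κ + 1) * ((1 + μ) / 2) ^ k * ‖x 0‖ := by gcongr; linarith

end LyapunovNorm

section Matrix

variable {n : Type*} [Fintype n]

lemma sqrt_dotProduct_self_eq_norm (v : n → ℝ) : √(v ⬝ᵥ v) = ‖WithLp.toLp 2 v‖ := by
  rw [norm_eq_sqrt_real_inner, EuclideanSpace.inner_toLp_toLp]; rfl

variable [DecidableEq n]

lemma norm_le_norm_inv_mul_norm_toEuclideanCLM {B : Matrix n n ℝ} (hB : IsUnit B)
    (v : EuclideanSpace ℝ n) : ‖v‖ ≤ ‖B⁻¹‖ * ‖toEuclideanCLM (𝕜 := ℝ) B v‖ :=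
  calc ‖v‖ = ‖toEuclideanCLM (𝕜 := ℝ) B⁻¹ (toEuclideanCLM (𝕜 := ℝ) B v)‖ := by
        rw [← mul_apply_eq_comp, ← map_mul, nonsing_inv_mul _ ((isUnit_iff_isUnit_det B).mp hB),
          map_one, one_apply_eq_self]
    _ ≤ ‖B⁻¹‖ * ‖toEuclideanCLM (𝕜 := ℝ) B v‖ := ContinuousLinearMap.le_opNorm _ _

lemma norm_sq_add_le_of_posSemidef {A B : Matrix n n ℝ} {α : ℝ}
    (h : (-α • (1 : Matrix n n ℝ) - (Aᵀ * (star B * B) * A - star B * B)).PosSemidef)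
    (v : EuclideanSpace ℝ n) :
    ‖toEuclideanCLM (𝕜 := ℝ) B (toEuclideanCLM (𝕜 := ℝ) A v)‖ ^ 2 + α * ‖v‖ ^ 2 ≤
      ‖toEuclideanCLM (𝕜 := ℝ) B v‖ ^ 2 := by
  have hquad (X : EuclideanSpace ℝ n →L[ℝ] EuclideanSpace ℝ n) :
      ⟪v, (star X * X) v⟫ = ‖X v‖ ^ 2 := by
    rw [ContinuousLinearMap.star_eq_adjoint, mul_apply_eq_comp,
      ContinuousLinearMap.adjoint_inner_right, real_inner_self_eq_norm_sq]
  have hnonneg := h.dotProduct_mulVec_nonneg (WithLp.ofLp v)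
  rw [star_trivial, ← inner_toEuclideanCLM, show Aᵀ = star A from rfl, ← mul_assoc,
    ← star_mul, mul_assoc] at hnonneg
  simp only [map_sub, map_smul, map_mul, map_one, map_star] at hnonneg
  rw [← map_mul] at hnonneg
  simp only [_root_.sub_apply, _root_.smul_apply, one_apply_eq_self, inner_sub_right,
    inner_smul_right, real_inner_self_eq_norm_sq, hquad] at hnonneg
  rw [map_mul, mul_apply_eq_comp] at hnonneg
  linarith

end Matrix

/-- Theorem 2 (Exponential Stability of MAPS-Gain LPV Control under Parameter
Estimation Error): if the closed-loop map `Φ_cl` is `L`-Lipschitz in the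
scheduling parameter (operator norm) and the true closed-loop matrices satisfy
a common discrete Lyapunov inequality `Φ_cl(ρ_k)ᵀ P Φ_cl(ρ_k) - P ≼ -α I`,
then there are constants `ε* > 0`, `C > 0`, `λ ∈ (0,1)` depending only on
`P`, `α`, `L` such that whenever `‖ρ̂_k - ρ_k‖ < ε*` for all `k`, every
trajectory of `x_{k+1} = Φ_cl(ρ̂_k) x_k` satisfies `‖x_k‖ ≤ C λᵏ ‖x₀‖`. -/
theorem maps_exponential_stability_under_mismatch
    {n p : ℕ} (P : Matrix (Fin n) (Fin n) ℝ) (hP : P.PosDef)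
    (α : ℝ) (hα : 0 < α)
    (Φcl : EuclideanSpace ℝ (Fin p) → Matrix (Fin n) (Fin n) ℝ)
    (L : ℝ) (hL : 0 < L)
    (hLip : ∀ ρ₁ ρ₂, ‖Φcl ρ₁ - Φcl ρ₂‖ ≤ L * ‖ρ₁ - ρ₂‖) :
    ∃ εstar C lam : ℝ, 0 < εstar ∧ 0 < C ∧ 0 < lam ∧ lam < 1 ∧
      ∀ (ρ ρhat : ℕ → EuclideanSpace ℝ (Fin p)),
        (∀ k, Matrix.PosSemidef ((-α • (1 : Matrix (Fin n) (Fin n) ℝ)) -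
          ((Φcl (ρ k))ᵀ * P * Φcl (ρ k) - P))) →
        (∀ k, ‖ρhat k - ρ k‖ < εstar) →
        ∀ x : ℕ → Fin n → ℝ,
          (∀ k, x (k + 1) = Φcl (ρhat k) *ᵥ x k) →
          ∀ k, Real.sqrt (x k ⬝ᵥ x k) ≤
            C * lam ^ k * Real.sqrt (x 0 ⬝ᵥ x 0) := by
  obtain ⟨B, rfl⟩ := CStarAlgebra.nonneg_iff_eq_star_mul_self.mp hP.posSemidef.nonneg
  have hB : IsUnit B := isUnit_of_mul_isUnit_right hP.isUnit
  set T := toEuclideanCLM (n := Fin n) (𝕜 := ℝ)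
  obtain ⟨δ, C, r, hδ, hC, hr0, hr1, hdecay⟩ := exists_robust_exponential_decay (T B)
    (norm_nonneg _) (norm_le_norm_inv_mul_norm_toEuclideanCLM hB) hα
  refine ⟨δ / L, C, r, div_pos hδ hL, hC, hr0, hr1, fun ρ ρhat hLyap hclose x hx k ↦ ?_⟩
  have hmismatch (k : ℕ) : ‖T (Φcl (ρhat k)) - T (Φcl (ρ k))‖ < δ :=
    calc ‖T (Φcl (ρhat k)) - T (Φcl (ρ k))‖ = ‖Φcl (ρhat k) - Φcl (ρ k)‖ := by
          rw [← map_sub, l2_opNorm_toEuclideanCLM]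
      _ ≤ L * ‖ρhat k - ρ k‖ := hLip _ _
      _ < L * (δ / L) := by gcongr; exact hclose k
      _ = δ := by field_simp
  simpa only [sqrt_dotProduct_self_eq_norm] using
    hdecay (fun k ↦ T (Φcl (ρ k))) (fun k ↦ T (Φcl (ρhat k)))
      (fun k ↦ norm_sq_add_le_of_posSemidef (hLyap k)) hmismatch (fun k ↦ WithLp.toLp 2 (x k))
      (fun k ↦ by simp only [hx k, T, toEuclideanCLM_toLp]) k
end
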